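/- If an infinite-dimensional Banach space X satisfies δ̄_X(1/2) > 0, then X has the point of continuity property. -/

import Mathlib

open Filter Topology

/-- The modulus of asymptotic uniform convexity
`δ̄_X(ε) = inf_{x ∈ S(X)} sup_Y inf_{y ∈ S(Y)} (‖x + εy‖ − 1)`, where `Y` ranges
over the closed finite-codimensional subspaces of `X`. -/
noncomputable def aucMod (X : Type*) [NormedAddCommGroup X] [NormedSpace ℝ X] (ε : ℝ) : ℝ :=
  sInf { d : ℝ | ∃ x : X, ‖x‖ = 1 ∧
    d = sSup { c : ℝ | ∃ Y : Submodule ℝ X, IsClosed (Y : Set X) ∧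
      FiniteDimensional ℝ (X ⧸ Y) ∧
      c = sInf { r : ℝ | ∃ y ∈ Y, ‖y‖ = 1 ∧ r = ‖x + ε • y‖ - 1 } } }

/-- `V` is open in the weak topology of the normed space `X`: around each of its
points it contains a basic weak neighbourhood determined by finitely many
continuous functionals. -/
def IsWeaklyOpen {X : Type*} [NormedAddCommGroup X] [NormedSpace ℝ X] (V : Set X) : Prop :=
  ∀ x ∈ V, ∃ (s : Finset (X →L[ℝ] ℝ)) (δ : ℝ), 0 < δ ∧
    { y : X | ∀ f ∈ s, |f y - f x| < δ } ⊆ V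

/-- `X` has the point of continuity property (PCP): every nonempty bounded subset
of `X` admits nonempty relatively weakly open subsets of arbitrarily small
diameter. -/
def HasPCP (X : Type*) [NormedAddCommGroup X] [NormedSpace ℝ X] : Prop :=
  ∀ A : Set X, A.Nonempty → Bornology.IsBounded A → ∀ ε : ℝ, 0 < ε →
    ∃ V : Set X, IsWeaklyOpen V ∧ (V ∩ A).Nonempty ∧ Metric.diam (V ∩ A) < ε

/-!
Let `m` be the infimum of the radii `r` for which some relatively weakly open piece `V ∩ A` of `A`
lies in the ball of radius `r` about one of its points `b`. Suppose `m > 0` and take such a piece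
with `r` close to `m`, and a point `x` of it at distance close to `m` from `b`. Since
`δ̄_X(1/2) > 0`, some closed finite-codimensional `Y` satisfies
`‖(x - b) + z‖ ≥ (1 + δ) ‖x - b‖` for all `z ∈ Y` with `‖z‖ ≥ ‖x - b‖ / 2` (convexity of the
norm along lines). Cutting `V` down by finitely many functionals forces `y - x` to be close to `Y`
for every `y` of the new piece; as `y` stays within `r` of `b`, this leaves `‖y - x‖` at most about
`‖x - b‖ / 2`, a piece of radius about `m / 2` around `x`, contradicting the choice of `m`.
-/

open Metric

theorem FiniteDimensional.exists_finset_dual_norm_lt {Q : Type*} [NormedAddCommGroup Q]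
    [NormedSpace ℝ Q] [FiniteDimensional ℝ Q] {η : ℝ} (hη : 0 < η) :
    ∃ (s : Finset (Q →L[ℝ] ℝ)) (δ : ℝ), 0 < δ ∧ ∀ q : Q, (∀ g ∈ s, |g q| < δ) → ‖q‖ < η := by
  classical
  let e : Q ≃L[ℝ] (Fin (Module.finrank ℝ Q) → ℝ) :=
    (Module.finBasis ℝ Q).equivFun.toContinuousLinearEquiv
  obtain ⟨δ, hδ, hδη⟩ := continuousAt_iff.1 (e.symm.continuous.continuousAt (x := 0)) η hη
  refine ⟨Finset.univ.image fun i ↦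
    (ContinuousLinearMap.proj i : (Fin _ → ℝ) →L[ℝ] ℝ).comp e.toContinuousLinearMap, δ, hδ,
    fun q hq ↦ ?_⟩
  have : ‖e q‖ < δ := (pi_norm_lt_iff hδ).2 fun i ↦ by
    simpa using hq _ (Finset.mem_image_of_mem _ (Finset.mem_univ i))
  simpa [e.symm_apply_apply] using hδη (x := e q) (by simpa using this)

section

variable {X : Type*} [NormedAddCommGroup X] [NormedSpace ℝ X]

theorem isWeaklyOpen_univ : IsWeaklyOpen (Set.univ : Set X) :=
  fun _ _ ↦ ⟨∅, 1, one_pos, Set.subset_univ _⟩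

theorem IsWeaklyOpen.inter {V W : Set X} (hV : IsWeaklyOpen V) (hW : IsWeaklyOpen W) :
    IsWeaklyOpen (V ∩ W) := by
  classical
  rintro x ⟨hxV, hxW⟩
  obtain ⟨s, δ, hδ, hs⟩ := hV x hxV
  obtain ⟨t, ε, hε, ht⟩ := hW x hxW
  refine ⟨s ∪ t, min δ ε, lt_min hδ hε, fun y hy ↦ ⟨hs fun f hf ↦ ?_, ht fun f hf ↦ ?_⟩⟩
  · exact (hy f (Finset.mem_union_left _ hf)).trans_le (min_le_left _ _)
  · exact (hy f (Finset.mem_union_right _ hf)).trans_le (min_le_right _ _)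

theorem isWeaklyOpen_setOf_abs_sub_lt (x : X) (s : Finset (X →L[ℝ] ℝ)) (c : ℝ) :
    IsWeaklyOpen {y : X | ∀ f ∈ s, |f y - f x| < c} := by
  intro y₀ hy₀
  have : ∀ᶠ δ in 𝓝[>] (0 : ℝ), 0 < δ ∧ ∀ f ∈ s, δ < c - |f y₀ - f x| :=
    eventually_mem_nhdsWithin.and <| (Filter.eventually_all_finset s).2 fun f hf ↦
      nhdsWithin_le_nhds <| eventually_lt_nhds <| sub_pos.2 (hy₀ f hf)
  obtain ⟨δ, hδ, hδc⟩ := this.exists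
  refine ⟨s, δ, hδ, fun y hy f hf ↦ ?_⟩
  calc |f y - f x| ≤ |f y - f y₀| + |f y₀ - f x| := abs_sub_le _ _ _
    _ < c := by linarith [hy f hf, hδc f hf]

theorem norm_add_smul_le_norm_add_smul {v u : X} {s t : ℝ} (hs : 0 < s) (hst : s ≤ t)
    (h : ‖v‖ ≤ ‖v + s • u‖) : ‖v + s • u‖ ≤ ‖v + t • u‖ := by
  have hconv : ConvexOn ℝ Set.univ fun r : ℝ ↦ ‖v + r • u‖ := by
    simpa [Function.comp_def, AffineMap.lineMap_apply, add_comm] using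
      (convexOn_norm convex_univ).comp_affineMap (AffineMap.lineMap v (v + u))
  simpa using
    hconv.le_right_of_left_le'' (Set.mem_univ 0) (Set.mem_univ t) hs hst (by simpa using h)

theorem mul_one_add_le_norm_smul_add_smul {x u : X} {a t ε δ : ℝ} (ha : 0 < a) (hδ : 0 ≤ δ)
    (ht : ε * a ≤ t) (hε : 0 < ε) (hx : ‖x‖ ≤ 1) (h : 1 + δ ≤ ‖x + ε • u‖) :
    a * (1 + δ) ≤ ‖a • x + t • u‖ := by
  have hscale : ‖a • x + (ε * a) • u‖ = a * ‖x + ε • u‖ := by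
    rw [← norm_smul_of_nonneg ha.le, smul_add, smul_smul, mul_comm]
  have hgrow : a * (1 + δ) ≤ ‖a • x + (ε * a) • u‖ := by
    rw [hscale]; exact mul_le_mul_of_nonneg_left h ha.le
  refine hgrow.trans (norm_add_smul_le_norm_add_smul (by positivity) ht ?_)
  calc ‖a • x‖ ≤ a := by rw [norm_smul_of_nonneg ha.le]; exact mul_le_of_le_one_right ha.le hx
    _ ≤ a * (1 + δ) := le_mul_of_one_le_right ha.le (by linarith)
    _ ≤ _ := hgrow

theorem Submodule.exists_finset_dual_subset_thickening (Y : Submodule ℝ X)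
    (hYc : IsClosed (Y : Set X)) (hYf : FiniteDimensional ℝ (X ⧸ Y)) {η : ℝ} (hη : 0 < η) :
    ∃ (s : Finset (X →L[ℝ] ℝ)) (δ : ℝ), 0 < δ ∧
      {v | ∀ f ∈ s, |f v| < δ} ⊆ thickening η (Y : Set X) := by
  classical
  have : IsClosed (Y : Set X) := hYc
  obtain ⟨s, δ, hδ, hs⟩ := FiniteDimensional.exists_finset_dual_norm_lt (Q := X ⧸ Y) hη
  refine ⟨s.image fun g ↦ g.comp Y.mkQL, δ, hδ, fun v hv ↦ ?_⟩
  have := hs (Y.mkQ v) fun g hg ↦ by simpa using hv _ (Finset.mem_image_of_mem _ hg)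
  rw [mem_thickening_iff_infDist_lt ⟨0, Y.zero_mem⟩]
  exact (QuotientAddGroup.norm_mk (S := Y.toAddSubgroup) v).symm.trans_lt this

/- The nested extrema of `aucMod`: `aucModAtIn x ε Y = inf_{y ∈ S(Y)} (‖x + εy‖ − 1)` (which is `0`
when `S(Y)` is empty), `aucModAt x ε` is its supremum over `Y`, and `aucMod X ε` is the infimum of
`aucModAt x ε` over `x ∈ S(X)`. -/
noncomputable def aucModAtIn (x : X) (ε : ℝ) (Y : Submodule ℝ X) : ℝ :=
  sInf {r : ℝ | ∃ y ∈ Y, ‖y‖ = 1 ∧ r = ‖x + ε • y‖ - 1}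

noncomputable def aucModAt (x : X) (ε : ℝ) : ℝ :=
  sSup {c : ℝ | ∃ Y : Submodule ℝ X, IsClosed (Y : Set X) ∧ FiniteDimensional ℝ (X ⧸ Y) ∧
    c = aucModAtIn x ε Y}

theorem bddBelow_aucModAtIn_set (x : X) (ε : ℝ) (Y : Submodule ℝ X) :
    BddBelow {r : ℝ | ∃ y ∈ Y, ‖y‖ = 1 ∧ r = ‖x + ε • y‖ - 1} := by
  refine ⟨-1, ?_⟩
  rintro _ ⟨y, -, -, rfl⟩
  linarith [norm_nonneg (x + ε • y)]

theorem aucModAtIn_le {x y : X} {ε : ℝ} {Y : Submodule ℝ X} (hy : y ∈ Y) (hy1 : ‖y‖ = 1) :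
    aucModAtIn x ε Y ≤ ‖x + ε • y‖ - 1 :=
  csInf_le (bddBelow_aucModAtIn_set x ε Y) ⟨y, hy, hy1, rfl⟩

theorem neg_one_le_aucModAtIn (x : X) (ε : ℝ) (Y : Submodule ℝ X) : -1 ≤ aucModAtIn x ε Y :=
  Real.le_sInf (by rintro _ ⟨y, -, -, rfl⟩; linarith [norm_nonneg (x + ε • y)]) (by norm_num)

theorem aucModAtIn_le_abs {x : X} (hx : ‖x‖ = 1) (ε : ℝ) (Y : Submodule ℝ X) :
    aucModAtIn x ε Y ≤ |ε| := by
  obtain ⟨y, hy, hy1⟩ | hY := em (∃ y ∈ Y, ‖y‖ = 1)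
  · refine (aucModAtIn_le hy hy1).trans ?_
    have := norm_add_le x (ε • y)
    rw [norm_smul, hx, hy1, Real.norm_eq_abs] at this
    linarith
  · push Not at hY
    have hempty : {r : ℝ | ∃ y ∈ Y, ‖y‖ = 1 ∧ r = ‖x + ε • y‖ - 1} = ∅ :=
      Set.eq_empty_of_forall_notMem fun r ⟨y, hy, hy1, _⟩ ↦ hY y hy hy1
    simp only [aucModAtIn, hempty, Real.sInf_empty, abs_nonneg]

theorem bddAbove_aucModAt_set {x : X} (hx : ‖x‖ = 1) (ε : ℝ) :
    BddAbove {c : ℝ | ∃ Y : Submodule ℝ X, IsClosed (Y : Set X) ∧ FiniteDimensional ℝ (X ⧸ Y) ∧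
      c = aucModAtIn x ε Y} :=
  ⟨|ε|, by rintro _ ⟨Y, -, -, rfl⟩; exact aucModAtIn_le_abs hx ε Y⟩

theorem aucModAtIn_le_aucModAt {x : X} (hx : ‖x‖ = 1) {ε : ℝ} {Y : Submodule ℝ X}
    (hYc : IsClosed (Y : Set X)) (hYf : FiniteDimensional ℝ (X ⧸ Y)) :
    aucModAtIn x ε Y ≤ aucModAt x ε :=
  le_csSup (bddAbove_aucModAt_set hx ε) ⟨Y, hYc, hYf, rfl⟩

theorem neg_one_le_aucModAt {x : X} (hx : ‖x‖ = 1) (ε : ℝ) : -1 ≤ aucModAt x ε :=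
  (neg_one_le_aucModAtIn x ε ⊤).trans (aucModAtIn_le_aucModAt hx isClosed_univ inferInstance)

theorem aucMod_le_aucModAt {x : X} (hx : ‖x‖ = 1) (ε : ℝ) : aucMod X ε ≤ aucModAt x ε := by
  have hbdd : BddBelow {d : ℝ | ∃ x : X, ‖x‖ = 1 ∧ d = aucModAt x ε} :=
    ⟨-1, by rintro _ ⟨x', hx', rfl⟩; exact neg_one_le_aucModAt hx' ε⟩
  exact csInf_le hbdd ⟨x, hx, rfl⟩

theorem exists_lt_aucModAtIn {x : X} {ε c : ℝ} (h : c < aucModAt x ε) :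
    ∃ Y : Submodule ℝ X, IsClosed (Y : Set X) ∧ FiniteDimensional ℝ (X ⧸ Y) ∧
      c < aucModAtIn x ε Y := by
  have hne : {c : ℝ | ∃ Y : Submodule ℝ X, IsClosed (Y : Set X) ∧
      FiniteDimensional ℝ (X ⧸ Y) ∧ c = aucModAtIn x ε Y}.Nonempty :=
    ⟨_, ⊤, isClosed_univ, inferInstance, rfl⟩
  obtain ⟨_, ⟨Y, hYc, hYf, rfl⟩, hc⟩ := exists_lt_of_lt_csSup hne h
  exact ⟨Y, hYc, hYf, hc⟩

variable (X) in
def IsAUCBound (ε δ : ℝ) : Prop :=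
  ∀ x : X, ‖x‖ = 1 → ∃ Y : Submodule ℝ X, IsClosed (Y : Set X) ∧ FiniteDimensional ℝ (X ⧸ Y) ∧
    ∀ y ∈ Y, ‖y‖ = 1 → 1 + δ ≤ ‖x + ε • y‖

theorem isAUCBound_of_lt_aucMod {ε δ : ℝ} (h : δ < aucMod X ε) : IsAUCBound X ε δ := by
  intro x hx
  obtain ⟨Y, hYc, hYf, hδY⟩ := exists_lt_aucModAtIn (h.trans_le (aucMod_le_aucModAt hx ε))
  exact ⟨Y, hYc, hYf, fun y hy hy1 ↦ by linarith [aucModAtIn_le (x := x) (ε := ε) hy hy1]⟩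

theorem IsAUCBound.exists_isWeaklyOpen_subset_closedBall {ε δ : ℝ} (hX : IsAUCBound X ε δ)
    (hε : 0 < ε) (hδ : 0 < δ) {A V : Set X} {b x : X} {r η : ℝ} (hV : IsWeaklyOpen V)
    (hVA : V ∩ A ⊆ closedBall b r) (hx : x ∈ V ∩ A) (hη : 0 < η)
    (hr : r + η < ‖x - b‖ * (1 + δ)) :
    ∃ W, IsWeaklyOpen W ∧ x ∈ W ∧ W ∩ A ⊆ closedBall x (ε * ‖x - b‖ + η) := by
  set v := x - b
  have hr0 : 0 ≤ r := dist_nonneg.trans (hVA hx)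
  have hv : v ≠ 0 := by
    rintro hv
    rw [hv, norm_zero, zero_mul] at hr
    linarith
  have hunit : ∀ {w : X}, w ≠ 0 → ‖‖w‖⁻¹ • w‖ = 1 := fun hw ↦ by
    rw [norm_smul, norm_inv, norm_norm, inv_mul_cancel₀ (norm_ne_zero_iff.2 hw)]
  obtain ⟨Y, hYc, hYf, hY⟩ := hX _ (hunit hv)
  obtain ⟨s, c, hc, hsY⟩ := Y.exists_finset_dual_subset_thickening hYc hYf hη
  refine ⟨V ∩ {y | ∀ f ∈ s, |f y - f x| < c}, hV.inter (isWeaklyOpen_setOf_abs_sub_lt x s c),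
    ⟨hx.1, fun f _ ↦ by simpa using hc⟩, ?_⟩
  rintro y ⟨⟨hyV, hys⟩, hyA⟩
  obtain ⟨z, hzY, hwz⟩ := mem_thickening_iff.1 (hsY (a := y - x) fun f hf ↦ by simpa using hys f hf)
  rw [dist_eq_norm] at hwz
  rw [mem_closedBall, dist_eq_norm]
  by_contra! hfar
  have hz : ε * ‖v‖ < ‖z‖ := by linarith [norm_sub_norm_le (y - x) z]
  have hz0 : z ≠ 0 := norm_pos_iff.1 ((mul_nonneg hε.le (norm_nonneg v)).trans_lt hz)
  have hgrow : ‖v‖ * (1 + δ) ≤ ‖v + z‖ := by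
    have := mul_one_add_le_norm_smul_add_smul (norm_pos_iff.2 hv) hδ.le hz.le hε
      (hunit hv).le (hY _ (Y.smul_mem _ hzY) (hunit hz0))
    rwa [smul_inv_smul₀ (norm_ne_zero_iff.2 hv), smul_inv_smul₀ (norm_ne_zero_iff.2 hz0)] at this
  have hyb : ‖y - b‖ ≤ r := by simpa [dist_eq_norm] using hVA ⟨hyV, hyA⟩
  have hsplit : ‖v + z‖ ≤ ‖y - b‖ + ‖y - x - z‖ := by
    have : v + z = (y - b) - (y - x - z) := by simp only [v]; abel
    rw [this]
    exact norm_sub_le _ _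
  linarith

def weakOpenRadii (A : Set X) : Set ℝ :=
  {r | ∃ V, IsWeaklyOpen V ∧ ∃ b ∈ V ∩ A, V ∩ A ⊆ closedBall b r}

theorem weakOpenRadii_nonempty {A : Set X} (hA : A.Nonempty) (hAb : Bornology.IsBounded A) :
    (weakOpenRadii A).Nonempty := by
  obtain ⟨a, ha⟩ := hA
  obtain ⟨R, hR⟩ := hAb.subset_closedBall a
  exact ⟨R, Set.univ, isWeaklyOpen_univ, a, ⟨trivial, ha⟩, Set.inter_subset_right.trans hR⟩

theorem nonneg_of_mem_weakOpenRadii {A : Set X} {r : ℝ} (hr : r ∈ weakOpenRadii A) : 0 ≤ r := by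
  obtain ⟨V, -, b, hb, hVb⟩ := hr
  exact nonempty_closedBall.1 ⟨b, hVb hb⟩

theorem exists_isWeaklyOpen_diam_le_of_mem_weakOpenRadii {A : Set X} {r : ℝ}
    (hr : r ∈ weakOpenRadii A) :
    ∃ V, IsWeaklyOpen V ∧ (V ∩ A).Nonempty ∧ diam (V ∩ A) ≤ 2 * r := by
  obtain ⟨V, hV, b, hb, hVb⟩ := hr
  exact ⟨V, hV, ⟨b, hb⟩, (diam_mono hVb isBounded_closedBall).trans
    (diam_closedBall (nonneg_of_mem_weakOpenRadii ⟨V, hV, b, hb, hVb⟩))⟩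

theorem IsAUCBound.sInf_weakOpenRadii_eq_zero {ε δ : ℝ} (hX : IsAUCBound X ε δ) (hε0 : 0 < ε)
    (hε1 : ε < 1) (hδ : 0 < δ) {A : Set X} (hA : A.Nonempty) (hAb : Bornology.IsBounded A) :
    sInf (weakOpenRadii A) = 0 := by
  have hne := weakOpenRadii_nonempty hA hAb
  have hbdd : BddBelow (weakOpenRadii A) := ⟨0, fun _ ↦ nonneg_of_mem_weakOpenRadii⟩
  set m := sInf (weakOpenRadii A)
  refine le_antisymm (not_lt.1 fun hm ↦ ?_) (Real.sInf_nonneg fun _ ↦ nonneg_of_mem_weakOpenRadii)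
  -- `t` is small enough for `1 + 2t ≤ (1 - t)(1 + δ)` and `ε (1 + t) + t < 1`
  obtain ⟨t, ht, htδ, htε⟩ : ∃ t : ℝ, 0 < t ∧ 5 * t ≤ δ ∧ 5 * t ≤ 1 - ε :=
    ⟨min δ (1 - ε) / 5, div_pos (lt_min hδ (sub_pos.2 hε1)) (by norm_num),
      by linarith [min_le_left δ (1 - ε)], by linarith [min_le_right δ (1 - ε)]⟩
  obtain ⟨r, ⟨V, hV, b, hb, hVb⟩, hr⟩ :=
    exists_lt_of_csInf_lt hne (show m < m * (1 + t) by nlinarith)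
  obtain ⟨x, hx, hxb⟩ : ∃ x ∈ V ∩ A, m * (1 - t) < ‖x - b‖ := by
    by_contra! hnear
    have : m * (1 - t) ∈ weakOpenRadii A :=
      ⟨V, hV, b, hb, fun y hy ↦ by simpa [dist_eq_norm] using hnear y hy⟩
    nlinarith [csInf_le hbdd this]
  have hxr : ‖x - b‖ ≤ r := by simpa [dist_eq_norm] using hVb hx
  have hgap : r + m * t < ‖x - b‖ * (1 + δ) := by
    have : 1 + 2 * t ≤ (1 - t) * (1 + δ) := by nlinarith
    nlinarith
  obtain ⟨W, hW, hxW, hWA⟩ :=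
    hX.exists_isWeaklyOpen_subset_closedBall hε0 hδ hV hVb hx (by positivity) hgap
  have := csInf_le hbdd ⟨W, hW, x, ⟨hxW, hx.2⟩, hWA⟩
  nlinarith

end

theorem hasPCP_of_aucMod_half_pos_general
    (X : Type*) [NormedAddCommGroup X] [NormedSpace ℝ X]
    (h : 0 < aucMod X (1 / 2)) : HasPCP X := by
  intro A hA hAb ε hε
  have hAUC : IsAUCBound X (1 / 2) (aucMod X (1 / 2) / 2) := isAUCBound_of_lt_aucMod (by linarith)
  have hinf : sInf (weakOpenRadii A) < ε / 2 := by
    rw [hAUC.sInf_weakOpenRadii_eq_zero (by norm_num) (by norm_num) (by positivity) hA hAb]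
    positivity
  obtain ⟨r, hr, hrε⟩ := exists_lt_of_csInf_lt (weakOpenRadii_nonempty hA hAb) hinf
  obtain ⟨V, hV, hVA, hdiam⟩ := exists_isWeaklyOpen_diam_le_of_mem_weakOpenRadii hr
  exact ⟨V, hV, hVA, by linarith⟩

/-- **Proposition.** If an infinite-dimensional Banach space `X`
satisfies `δ̄_X(1/2) > 0`, then `X` has the point of continuity property. -/
theorem hasPCP_of_aucMod_half_pos
    (X : Type*) [NormedAddCommGroup X] [NormedSpace ℝ X] [CompleteSpace X]
    (hX : ¬ FiniteDimensional ℝ X)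
    (h : 0 < aucMod X (1 / 2)) : HasPCP X :=
  hasPCP_of_aucMod_half_pos_general X h
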